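/- arXiv:2402.05221 — 5 statements merged into one kernel-verified Lean document; each statement's English description precedes it below -/
import Mathlib

section
/- Let n ≥ 1 and 1 ≤ k ≤ n. For every partition λ of n and every pair (T,S) ∈ SYT(λ) × SYT(λ), the polynomial F_T^S does not lie in the ideal 𝓘_k; i.e., F_T^S is nonzero in P_n^{(k)} = ℂ[𝐱,𝐲]/𝓘_k. In fact, no monomial occurring in F_T^S with nonzero coefficient lies in 𝓘_k. -/
open MvPolynomial

noncomputable section

/-- The polynomial ring `ℂ[x₁,…,xₙ,y₁,…,yₙ]`; variable `Sum.inl i` is `xᵢ`,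
variable `Sum.inr i` is `yᵢ`. -/
abbrev PolyXY (n : ℕ) : Type := MvPolynomial (Fin n ⊕ Fin n) ℂ

/-- The diagonal action of `π ∈ Sₙ`: `π · f = f(x_{π(1)},…,x_{π(n)},y_{π(1)},…,y_{π(n)})`. -/
def diagAct {n : ℕ} (π : Equiv.Perm (Fin n)) (f : PolyXY n) : PolyXY n :=
  rename (Sum.map ⇑π ⇑π) f
/-- The cells of a Young diagram (French notation: a cell `(r, c)` lies in row `r`
counted from the bottom starting at `0`, and column `c` starting at `0`). -/
abbrev Cell (lam : YoungDiagram) : Type := {x // x ∈ lam.cells}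

/-- A bijective filling of the cells of `lam` with the `n` values (value `j : Fin n`
represents the entry `j+1`). -/
abbrev Tab (lam : YoungDiagram) (n : ℕ) : Type := Cell lam ≃ Fin n

def cellRow {lam : YoungDiagram} (b : Cell lam) : ℕ := b.1.1

def cellCol {lam : YoungDiagram} (b : Cell lam) : ℕ := b.1.2

/-- A filling is standard if entries increase left to right along rows and increase
up columns. -/
def IsSYT {lam : YoungDiagram} {n : ℕ} (T : Tab lam n) : Prop :=
  (∀ a b : Cell lam, cellRow a = cellRow b → cellCol a < cellCol b → T a < T b) ∧
  (∀ a b : Cell lam, cellCol a = cellCol b → cellRow a < cellRow b → T a < T b)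

/-- The row group `R(T)`: permutations sending each entry of `T` to an entry in the
same row. -/
def rowGroup {lam : YoungDiagram} {n : ℕ} (T : Tab lam n) : Finset (Equiv.Perm (Fin n)) :=
  Finset.univ.filter fun π => ∀ b : Cell lam, cellRow (T.symm (π (T b))) = cellRow b

/-- The column group `C(T)`: permutations sending each entry of `T` to an entry in the
same column. -/
def colGroup {lam : YoungDiagram} {n : ℕ} (T : Tab lam n) : Finset (Equiv.Perm (Fin n)) :=
  Finset.univ.filter fun π => ∀ b : Cell lam, cellCol (T.symm (π (T b))) = cellCol b

/-- The monomial `x_T^c y_T^d = ∏_{b ∈ λ} x_{T(b)}^{c(b)} y_{T(b)}^{d(b)}`. -/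
def tabMonomial {lam : YoungDiagram} {n : ℕ} (T : Tab lam n) (c d : Cell lam → ℕ) :
    PolyXY n :=
  ∏ b : Cell lam, (X (Sum.inl (T b)) ^ c b * X (Sum.inr (T b)) ^ d b)

/-- The higher Specht polynomial `F_T^{c,d} = ε_T(x_T^c y_T^d)`, where
`ε_T = Σ_{τ∈C(T)} Σ_{σ∈R(T)} sgn(τ)·τσ`. -/
def FTcd {lam : YoungDiagram} {n : ℕ} (T : Tab lam n) (c d : Cell lam → ℕ) : PolyXY n :=
  ∑ τ ∈ colGroup T, ∑ σ ∈ rowGroup T,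
    ((Equiv.Perm.sign τ : ℤ) : ℂ) • diagAct (τ * σ) (tabMonomial T c d)
/-- The row (from the bottom, `0`-indexed) containing the `1`-indexed entry `j` of `S`. -/
def rowOfVal {lam : YoungDiagram} {n : ℕ} (S : Tab lam n) (j : ℕ) : ℕ :=
  if h : j - 1 < n then cellRow (S.symm ⟨j - 1, h⟩) else 0

/-- The descent set of `S` (1-indexed): those `d ∈ {1,…,n−1}` such that `d+1` lies in a
strictly higher row of `S` than `d`. -/
def DesSet {lam : YoungDiagram} {n : ℕ} (S : Tab lam n) : Finset ℕ :=
  (Finset.Icc 1 (n - 1)).filter fun d => rowOfVal S d < rowOfVal S (d + 1)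

/-- The `μ`-cocharge tableau for the hook `μ = (n−k+1,1^{k−1})`: its value on the cell of
`S` containing (1-indexed) `j` is `#{d ∈ Des(S) : n−k+1 ≤ d ≤ j−1}`.  Here the cell `b`
contains the 1-indexed entry `(S b : ℕ) + 1`. -/
def ccTabMu {lam : YoungDiagram} {n : ℕ} (k : ℕ) (S : Tab lam n) (b : Cell lam) : ℕ :=
  ((DesSet S).filter fun d => n - k + 1 ≤ d ∧ d ≤ (S b : ℕ)).card

/-- The reverse `μ`-cocharge tableau: its value on the cell of `S` containing `j` is
`#{d ∈ Des(S) : j ≤ d ≤ n−k}`. -/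
def ccTabMu' {lam : YoungDiagram} {n : ℕ} (k : ℕ) (S : Tab lam n) (b : Cell lam) : ℕ :=
  ((DesSet S).filter fun d => (S b : ℕ) + 1 ≤ d ∧ d ≤ n - k).card

/-- The higher Specht polynomial `F_T^S = ε_T(xy_T^S)` for the hook `μ = (n−k+1,1^{k−1})`. -/
def FTS {lam : YoungDiagram} {n : ℕ} (k : ℕ) (T S : Tab lam n) : PolyXY n :=
  FTcd T (ccTabMu k S) (ccTabMu' k S)
/-- The ideal `𝓘_k`, generated by all products of `k` distinct `x`-variables, all products
of `n−k+1` distinct `y`-variables, and the products `x_i y_i`. -/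
def Ik (n k : ℕ) : Ideal (PolyXY n) :=
  Ideal.span
    ({p : PolyXY n | ∃ A : Finset (Fin n), A.card = k ∧ p = ∏ i ∈ A, X (Sum.inl i)} ∪
     {p : PolyXY n | ∃ B : Finset (Fin n), B.card = n - k + 1 ∧ p = ∏ j ∈ B, X (Sum.inr j)} ∪
     {p : PolyXY n | ∃ i : Fin n, p = X (Sum.inl i) * X (Sum.inr i)})

/-- `e_d^{(k)}`: the elementary symmetric polynomial `e_d` in the `x`-variables if
`d ≤ k−1`, and `e_{n−d}` in the `y`-variables if `d ≥ k`. -/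
def edk (n k d : ℕ) : PolyXY n :=
  if d ≤ k - 1 then rename Sum.inl (esymm (Fin n) ℂ d)
  else rename Sum.inr (esymm (Fin n) ℂ (n - d))

/-- `e_ν^{(k)} = ∏_i e_{ν_i}^{(k)}` for a partition `ν` given by its multiset of parts. -/
def enuk (n k : ℕ) (nu : Multiset ℕ) : PolyXY n := (nu.map (edk n k)).prod

/-!
Each term `sgn(τ) · τσ · xy_T^S` of `F_T^S` is again a monomial `xy_{T'}^S`, for the filling
`T' = τσ ∘ T`. Such a monomial avoids the monomial ideal `𝓘_k`: its `x`-exponent is nonzero only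
at the entries `j ≥ n−k+2` of `S` and its `y`-exponent only at the entries `j ≤ n−k`, so it is
divisible by no product of `k` distinct `x`'s, of `n−k+1` distinct `y`'s, nor by any `xᵢyᵢ`.

It remains to see that `xy_T^S` itself survives in `F_T^S`. Up to a constant, the difference
`θ = ccTab_μ(S) − ccTab'_μ(S)` at the entry `j` counts the descents `d ≤ j−1` of `S`; since `S`
is standard, `θ` strictly increases up every column. If `τσ` fixes `xy_T^S` then `θ ∘ τσ = θ`,
and comparing the sums of `θ` over the topmost row containing a cell moved by `τ` shows that
there is no such row, i.e. `τ = 1`. So all the terms equal to `xy_T^S` come with sign `+1`.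
-/

open Finset

section MonomialIdeal

def IkGenExps (n k : ℕ) : Set ((Fin n ⊕ Fin n) →₀ ℕ) :=
  {e | ∃ A : Finset (Fin n), #A = k ∧ e = ∑ i ∈ A, Finsupp.single (Sum.inl i) 1} ∪
  {e | ∃ B : Finset (Fin n), #B = n - k + 1 ∧ e = ∑ j ∈ B, Finsupp.single (Sum.inr j) 1} ∪
  {e | ∃ i : Fin n, e = Finsupp.single (Sum.inl i) 1 + Finsupp.single (Sum.inr i) 1}

lemma prod_X_eq_monomial {ι σ R : Type*} [CommSemiring R] (s : Finset ι) (f : ι → σ) :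
    ∏ i ∈ s, (X (f i) : MvPolynomial σ R) = monomial (∑ i ∈ s, Finsupp.single (f i) 1) 1 := by
  rw [monomial_sum_one]; rfl

lemma Ik_eq_span_monomial (n k : ℕ) :
    Ik n k = Ideal.span ((fun e => monomial e (1 : ℂ)) '' IkGenExps n k) := by
  simp only [Ik, IkGenExps, Set.image_union]
  congr 2
  · congr 1 <;> ext p <;> simp [prod_X_eq_monomial, eq_comm]
  · ext p; simp [X, monomial_mul, eq_comm]

lemma mem_Ik_iff {n k : ℕ} {F : PolyXY n} :
    F ∈ Ik n k ↔ ∀ m ∈ F.support, (monomial m (1 : ℂ) : PolyXY n) ∈ Ik n k := by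
  simp only [Ik_eq_span_monomial, mem_ideal_span_monomial_image, support_monomial, one_ne_zero,
    if_false, mem_singleton, forall_eq]

end MonomialIdeal

section TabMonomial

variable {lam : YoungDiagram} {n : ℕ}

def tabExp (T : Tab lam n) (c d : Cell lam → ℕ) : (Fin n ⊕ Fin n) →₀ ℕ :=
  Finsupp.equivFunOnFinite.symm (Sum.elim (c ∘ T.symm) (d ∘ T.symm))

@[simp]
lemma tabExp_inl (T : Tab lam n) (c d : Cell lam → ℕ) (i : Fin n) :
    tabExp T c d (Sum.inl i) = c (T.symm i) := rfl

@[simp]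
lemma tabExp_inr (T : Tab lam n) (c d : Cell lam → ℕ) (i : Fin n) :
    tabExp T c d (Sum.inr i) = d (T.symm i) := rfl

lemma tabMonomial_eq_monomial (T : Tab lam n) (c d : Cell lam → ℕ) :
    tabMonomial T c d = monomial (tabExp T c d) 1 := by
  rw [monomial_eq, C_1, one_mul, Finsupp.prod_fintype _ _ fun _ => pow_zero _,
    Fintype.prod_sum_type, tabMonomial, prod_mul_distrib, ← T.symm.prod_comp, ← T.symm.prod_comp]
  simp

lemma diagAct_tabMonomial (π : Equiv.Perm (Fin n)) (T : Tab lam n) (c d : Cell lam → ℕ) :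
    diagAct π (tabMonomial T c d) = tabMonomial (T.trans π) c d := by
  simp [diagAct, tabMonomial, map_prod]

lemma coeff_FTcd (T : Tab lam n) (c d : Cell lam → ℕ) (e : (Fin n ⊕ Fin n) →₀ ℕ) :
    coeff e (FTcd T c d) = ∑ τ ∈ colGroup T, ∑ σ ∈ rowGroup T,
      if tabExp (T.trans (τ * σ)) c d = e then ((Equiv.Perm.sign τ : ℤ) : ℂ) else 0 := by
  simp only [FTcd, diagAct_tabMonomial]
  simp only [tabMonomial_eq_monomial, coeff_sum, coeff_smul, coeff_monomial, smul_eq_mul, mul_ite,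
    mul_one, mul_zero]

lemma exists_tabExp_eq_of_mem_support_FTcd {T : Tab lam n} {c d : Cell lam → ℕ}
    {e : (Fin n ⊕ Fin n) →₀ ℕ} (he : e ∈ (FTcd T c d).support) :
    ∃ π : Equiv.Perm (Fin n), tabExp (T.trans π) c d = e := by
  rw [mem_support_iff, coeff_FTcd] at he
  obtain ⟨τ, -, hτ⟩ := exists_ne_zero_of_sum_ne_zero he
  obtain ⟨σ, -, hσ⟩ := exists_ne_zero_of_sum_ne_zero hτ
  exact ⟨τ * σ, of_not_not fun h => hσ (if_neg h)⟩

lemma one_mem_rowGroup (T : Tab lam n) : 1 ∈ rowGroup T := by simp [rowGroup]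

lemma one_mem_colGroup (T : Tab lam n) : 1 ∈ colGroup T := by simp [colGroup]

lemma coeff_tabExp_FTcd_ne_zero {T : Tab lam n} {c d : Cell lam → ℕ}
    (h : ∀ τ ∈ colGroup T, ∀ σ ∈ rowGroup T,
      tabExp (T.trans (τ * σ)) c d = tabExp T c d → τ = 1) :
    coeff (tabExp T c d) (FTcd T c d) ≠ 0 := by
  have hsign : ∀ τ ∈ colGroup T, ∀ σ ∈ rowGroup T,
      (if tabExp (T.trans (τ * σ)) c d = tabExp T c d then ((Equiv.Perm.sign τ : ℤ) : ℂ) else 0) =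
        if tabExp (T.trans (τ * σ)) c d = tabExp T c d then 1 else 0 := by
    intro τ hτ σ hσ
    split_ifs with he
    · simp [h τ hτ σ hσ he]
    · rfl
  rw [coeff_FTcd, sum_congr rfl fun τ hτ => sum_congr rfl (hsign τ hτ), ← sum_product',
    sum_boole, Nat.cast_ne_zero, ← pos_iff_ne_zero, card_pos]
  exact ⟨(1, 1), mem_filter.mpr
    ⟨mem_product.mpr ⟨one_mem_colGroup T, one_mem_rowGroup T⟩, by rw [mul_one]; rfl⟩⟩

end TabMonomial

section NotMem

variable {lam : YoungDiagram} {n : ℕ}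

lemma one_le_of_sum_single_le {ι σ : Type*} {s : Finset ι} {f : ι → σ} {e : σ →₀ ℕ}
    (h : ∑ i ∈ s, Finsupp.single (f i) 1 ≤ e) {i : ι} (hi : i ∈ s) : 1 ≤ e (f i) :=
  Finsupp.single_le_iff.mp ((single_le_sum (f := fun i => Finsupp.single (f i) 1)
    (fun _ _ => zero_le) hi).trans h)

lemma card_le_of_sum_single_le (T : Tab lam n) {s : Finset (Fin n)} {g : Fin n → Fin n ⊕ Fin n}
    {e : (Fin n ⊕ Fin n) →₀ ℕ} {f : Cell lam → ℕ} (he : ∀ i, e (g i) = f (T.symm i))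
    (hle : ∑ i ∈ s, Finsupp.single (g i) 1 ≤ e) : #s ≤ #{b | f b ≠ 0} := by
  rw [← card_map T.symm.toEmbedding]
  refine card_le_card fun b hb => ?_
  obtain ⟨i, hi, rfl⟩ := mem_map.mp hb
  have := he i ▸ one_le_of_sum_single_le hle hi
  simp only [mem_filter, mem_univ, true_and, Equiv.coe_toEmbedding]
  omega

lemma tabMonomial_notMem_Ik {k : ℕ} (T : Tab lam n) {c d : Cell lam → ℕ}
    (hc : #{b | c b ≠ 0} < k) (hd : #{b | d b ≠ 0} ≤ n - k) (hcd : ∀ b, c b = 0 ∨ d b = 0) :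
    tabMonomial T c d ∉ Ik n k := by
  rw [tabMonomial_eq_monomial, Ik_eq_span_monomial, mem_ideal_span_monomial_image]
  simp only [support_monomial, one_ne_zero, if_false, mem_singleton, forall_eq, not_exists,
    not_and]
  rintro g ((⟨A, hA, rfl⟩ | ⟨B, hB, rfl⟩) | ⟨i, rfl⟩) hle
  · have := card_le_of_sum_single_le T (tabExp_inl T c d) hle
    omega
  · have := card_le_of_sum_single_le T (tabExp_inr T c d) hle
    omega
  · have hx := Finsupp.single_le_iff.mp (le_trans le_self_add hle)
    have hy := Finsupp.single_le_iff.mp (le_trans le_add_self hle)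
    simp only [tabExp_inl, tabExp_inr] at hx hy
    have := hcd (T.symm i)
    omega

end NotMem

section ColumnStrict

variable {lam : YoungDiagram} {α : Type*} [AddCommMonoid α] [LinearOrder α]
  [IsOrderedCancelAddMonoid α]

lemma Cell.ext_of_row_col {u v : Cell lam} (hrow : cellRow u = cellRow v)
    (hcol : cellCol u = cellCol v) : u = v :=
  Subtype.ext (Prod.ext hrow hcol)

lemma colPerm_eq_one_of_invariant (θ : Cell lam → α)
    (hθ : ∀ u v, cellCol u = cellCol v → cellRow u < cellRow v → θ u < θ v)
    {t s : Equiv.Perm (Cell lam)} (ht : ∀ b, cellCol (t b) = cellCol b)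
    (hs : ∀ b, cellRow (s b) = cellRow b) (hinv : ∀ b, θ (t (s b)) = θ b) : t = 1 := by
  classical
  by_contra hne
  obtain ⟨b₀, hb₀, hmax⟩ := exists_max_image {b | t b ≠ b} cellRow
    (by simpa [Equiv.ext_iff, Finset.Nonempty] using hne)
  simp only [mem_filter, mem_univ, true_and] at hb₀ hmax
  set r := cellRow b₀
  have hfix : ∀ b, r < cellRow b → t b = b := fun b hb =>
    of_not_not fun h => (hmax b h).not_gt hb
  have hrow_le : ∀ b, cellRow b = r → cellRow (t b) ≤ r := fun b hb => by
    by_contra h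
    have := t.injective (hfix (t b) (by omega))
    rw [this] at h; omega
  have hθ_lt : ∀ b, cellRow b = r → t b ≠ b → θ (t b) < θ b := fun b hb hb' =>
    hθ _ _ (ht b) (lt_of_le_of_ne (hb ▸ hrow_le b hb)
      fun h => hb' (Cell.ext_of_row_col h (ht b)))
  have hsum : ∑ b ∈ {b | cellRow b = r}, θ (t b) < ∑ b ∈ {b | cellRow b = r}, θ b := by
    refine sum_lt_sum (fun b hb => ?_) ⟨b₀, by simp [r], hθ_lt b₀ rfl hb₀⟩
    simp only [mem_filter, mem_univ, true_and] at hb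
    by_cases h : t b = b
    · rw [h]
    · exact (hθ_lt b hb h).le
  have hperm : ∑ b ∈ {b | cellRow b = r}, θ (t (s b)) = ∑ b ∈ {b | cellRow b = r}, θ (t b) :=
    sum_equiv s (by simp [hs]) (fun _ _ => rfl)
  simp only [hinv] at hperm
  exact hsum.ne hperm.symm

end ColumnStrict

lemma Nat.exists_map_lt_map_succ_of_lt {α : Type*} [LinearOrder α] {f : ℕ → α} {a b : ℕ}
    (hab : a ≤ b) (h : f a < f b) : ∃ j, a ≤ j ∧ j < b ∧ f j < f (j + 1) := by
  induction b, hab using Nat.le_induction with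
  | base => exact absurd h (lt_irrefl _)
  | succ b hab ih =>
    by_cases hb : f a < f b
    · obtain ⟨j, haj, hjb, hj⟩ := ih hb
      exact ⟨j, haj, by omega, hj⟩
    · exact ⟨b, hab, by omega, (not_lt.mp hb).trans_lt h⟩

section Descents

variable {lam : YoungDiagram} {n : ℕ}

lemma rowOfVal_succ (S : Tab lam n) (j : Fin n) : rowOfVal S (j + 1) = cellRow (S.symm j) := by
  simp [rowOfVal]

lemma exists_mem_DesSet_of_row_lt {S : Tab lam n} (hS : IsSYT S) {u v : Cell lam}
    (hcol : cellCol u = cellCol v) (hrow : cellRow u < cellRow v) :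
    ∃ d ∈ DesSet S, (S u : ℕ) < d ∧ d ≤ S v := by
  have huv : (S u : ℕ) < S v := hS.2 u v hcol hrow
  have hrow' : rowOfVal S (S u + 1) < rowOfVal S (S v + 1) := by
    simpa only [rowOfVal_succ, Equiv.symm_apply_apply] using hrow
  obtain ⟨j, huj, hjv, hj⟩ := Nat.exists_map_lt_map_succ_of_lt (f := fun j => rowOfVal S (j + 1))
    huv.le hrow'
  have := (S v).isLt
  exact ⟨j + 1, mem_filter.mpr ⟨mem_Icc.mpr ⟨by omega, by omega⟩, hj⟩, by omega, by omega⟩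

lemma card_DesSet_le_lt {S : Tab lam n} (hS : IsSYT S) {u v : Cell lam}
    (hcol : cellCol u = cellCol v) (hrow : cellRow u < cellRow v) :
    #{d ∈ DesSet S | d ≤ (S u : ℕ)} < #{d ∈ DesSet S | d ≤ (S v : ℕ)} := by
  obtain ⟨d, hd, hud, hdv⟩ := exists_mem_DesSet_of_row_lt hS hcol hrow
  refine card_lt_card ((ssubset_iff_of_subset fun x hx => ?_).mpr ⟨d, ?_, ?_⟩)
  · simp only [mem_filter] at hx ⊢
    exact ⟨hx.1, by omega⟩
  · simp [hd, hdv]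
  · simp; omega

lemma ccTabMu_sub_ccTabMu' (k : ℕ) (S : Tab lam n) (b : Cell lam) :
    (ccTabMu k S b : ℤ) - ccTabMu' k S b =
      #{d ∈ DesSet S | d ≤ (S b : ℕ)} - #{d ∈ DesSet S | d ≤ n - k} := by
  rw [sub_eq_sub_iff_add_eq_add]
  norm_cast
  simp only [ccTabMu, ccTabMu', card_filter, ← sum_add_distrib]
  exact sum_congr rfl fun d _ => by split_ifs <;> omega

lemma ccTabMu_sub_ccTabMu'_lt {k : ℕ} {S : Tab lam n} (hS : IsSYT S) {u v : Cell lam}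
    (hcol : cellCol u = cellCol v) (hrow : cellRow u < cellRow v) :
    (ccTabMu k S u : ℤ) - ccTabMu' k S u < ccTabMu k S v - ccTabMu' k S v := by
  rw [ccTabMu_sub_ccTabMu', ccTabMu_sub_ccTabMu']
  have := card_DesSet_le_lt hS hcol hrow
  omega

lemma le_of_ccTabMu_ne_zero {k : ℕ} {S : Tab lam n} {b : Cell lam} (h : ccTabMu k S b ≠ 0) :
    n - k + 1 ≤ S b := by
  obtain ⟨d, hd⟩ := card_ne_zero.mp h
  rw [mem_filter] at hd
  omega

lemma lt_of_ccTabMu'_ne_zero {k : ℕ} {S : Tab lam n} {b : Cell lam} (h : ccTabMu' k S b ≠ 0) :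
    (S b : ℕ) < n - k := by
  obtain ⟨d, hd⟩ := card_ne_zero.mp h
  rw [mem_filter] at hd
  omega

lemma card_ccTabMu_ne_zero_lt {k : ℕ} (hk : 1 ≤ k) (S : Tab lam n) :
    #{b | ccTabMu k S b ≠ 0} < k := by
  have := card_le_card_of_injOn (fun b => (S b : ℕ)) (s := {b | ccTabMu k S b ≠ 0})
    (t := Ico (n - k + 1) n)
    (fun b hb => mem_Ico.mpr ⟨le_of_ccTabMu_ne_zero (mem_filter.mp hb).2, (S b).isLt⟩)
    (fun a _ b _ h => S.injective (Fin.ext h))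
  rw [Nat.card_Ico] at this
  omega

lemma card_ccTabMu'_ne_zero_le (k : ℕ) (S : Tab lam n) :
    #{b | ccTabMu' k S b ≠ 0} ≤ n - k := by
  simpa using card_le_card_of_injOn (fun b => (S b : ℕ)) (s := {b | ccTabMu' k S b ≠ 0})
    (t := range (n - k))
    (fun b hb => mem_range.mpr (lt_of_ccTabMu'_ne_zero (mem_filter.mp hb).2))
    (fun a _ b _ h => S.injective (Fin.ext h))

lemma ccTabMu_eq_zero_or_ccTabMu'_eq_zero (k : ℕ) (S : Tab lam n) (b : Cell lam) :
    ccTabMu k S b = 0 ∨ ccTabMu' k S b = 0 := by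
  by_contra! h
  have := le_of_ccTabMu_ne_zero h.1
  have := lt_of_ccTabMu'_ne_zero h.2
  omega

end Descents

lemma eq_one_of_tabExp_ccTabMu_eq {lam : YoungDiagram} {n k : ℕ} {T S : Tab lam n}
    (hS : IsSYT S) {τ σ : Equiv.Perm (Fin n)} (hτ : τ ∈ colGroup T) (hσ : σ ∈ rowGroup T)
    (h : tabExp (T.trans (τ * σ)) (ccTabMu k S) (ccTabMu' k S) =
      tabExp T (ccTabMu k S) (ccTabMu' k S)) : τ = 1 := by
  have hcells : T.symm.permCongr τ = 1 := by
    refine colPerm_eq_one_of_invariant (fun b => (ccTabMu k S b : ℤ) - ccTabMu' k S b)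
      (fun u v => ccTabMu_sub_ccTabMu'_lt hS) (s := T.symm.permCongr σ)
      (mem_filter.mp hτ).2 (mem_filter.mp hσ).2 fun b => ?_
    have hx := DFunLike.congr_fun h (Sum.inl ((τ * σ) (T b)))
    have hy := DFunLike.congr_fun h (Sum.inr ((τ * σ) (T b)))
    simp only [tabExp_inl, tabExp_inr, Equiv.symm_trans_apply, Equiv.symm_apply_apply] at hx hy
    simp only [Equiv.Perm.mul_apply] at hx hy
    simp only [Equiv.permCongr_apply, Equiv.symm_symm, Equiv.apply_symm_apply]
    rw [← hx, ← hy]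
  refine Equiv.ext fun i => ?_
  simpa using congr(T ($hcells (T.symm i)))

theorem stmt2_general (n k : ℕ) (hk1 : 1 ≤ k)
    (lam : YoungDiagram)
    (T S : Tab lam n) (hS : IsSYT S) :
    FTS k T S ∉ Ik n k ∧
    ∀ m ∈ (FTS k T S).support, (monomial m (1 : ℂ) : PolyXY n) ∉ Ik n k := by
  have hmonomials : ∀ m ∈ (FTS k T S).support, (monomial m (1 : ℂ) : PolyXY n) ∉ Ik n k := by
    intro m hm
    obtain ⟨π, rfl⟩ := exists_tabExp_eq_of_mem_support_FTcd hm
    rw [← tabMonomial_eq_monomial]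
    exact tabMonomial_notMem_Ik _ (card_ccTabMu_ne_zero_lt hk1 S) (card_ccTabMu'_ne_zero_le k S)
      (ccTabMu_eq_zero_or_ccTabMu'_eq_zero k S)
  have hcoeff : coeff (tabExp T (ccTabMu k S) (ccTabMu' k S)) (FTS k T S) ≠ 0 :=
    coeff_tabExp_FTcd_ne_zero fun τ hτ σ hσ => eq_one_of_tabExp_ccTabMu_eq hS hτ hσ
  refine ⟨fun hF => ?_, hmonomials⟩
  have hm := mem_support_iff.mpr hcoeff
  exact hmonomials _ hm (mem_Ik_iff.mp hF _ hm)

/-- For every pair `(T,S)` of standard Young tableaux of the same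
shape of size `n`, the polynomial `F_T^S` does not lie in `𝓘_k`; in fact no monomial
occurring in `F_T^S` with nonzero coefficient lies in `𝓘_k`. -/
theorem stmt2 (n k : ℕ) (hn : 1 ≤ n) (hk1 : 1 ≤ k) (hkn : k ≤ n)
    (lam : YoungDiagram) (hlam : lam.card = n)
    (T S : Tab lam n) (hT : IsSYT T) (hS : IsSYT S) :
    FTS k T S ∉ Ik n k ∧
    ∀ m ∈ (FTS k T S).support, (monomial m (1 : ℂ) : PolyXY n) ∉ Ik n k :=
  stmt2_general n k hk1 lam T S hS
end
end

section
/- Let n ≥ 1 and 1 ≤ k ≤ n. For every partition λ of n and every S ∈ SYT(λ), the integer-valued filling of λ given on each cell b by ccTab_μ(S)(b) − ccTab′_μ(S)(b) is weakly increasing from left to right along each row of λ and strictly increasing from bottom to top along each column of λ. -/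
open MvPolynomial

noncomputable section

lemma key_card (D : Finset ℕ) (t m : ℕ) :
    ((D.filter fun d => t + 1 ≤ d ∧ d ≤ m).card : ℤ) -
      ((D.filter fun d => m + 1 ≤ d ∧ d ≤ t).card : ℤ)
    = ((D.filter (· ≤ m)).card : ℤ) - ((D.filter (· ≤ t)).card : ℤ) := by
  have h1 := Finset.card_filter_add_card_filter_not
    (s := D.filter (· ≤ m)) (p := fun d => t + 1 ≤ d)
  have h2 := Finset.card_filter_add_card_filter_not
    (s := D.filter (· ≤ t)) (p := fun d => m + 1 ≤ d)
  rw [Finset.filter_filter, Finset.filter_filter] at h1 h2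
  have e1 : D.filter (fun d => d ≤ m ∧ t + 1 ≤ d) = D.filter fun d => t + 1 ≤ d ∧ d ≤ m :=
    Finset.filter_congr fun d _ => by omega
  have e2 : D.filter (fun d => d ≤ t ∧ m + 1 ≤ d) = D.filter fun d => m + 1 ≤ d ∧ d ≤ t :=
    Finset.filter_congr fun d _ => by omega
  have e3 : D.filter (fun d => d ≤ m ∧ ¬ t + 1 ≤ d) = D.filter fun d => d ≤ m ∧ d ≤ t :=
    Finset.filter_congr fun d _ => by omega
  have e4 : D.filter (fun d => d ≤ t ∧ ¬ m + 1 ≤ d) = D.filter fun d => d ≤ m ∧ d ≤ t :=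
    Finset.filter_congr fun d _ => by omega
  rw [e1, e3] at h1
  rw [e2, e4] at h2
  omega

lemma exists_descent {lam : YoungDiagram} {n : ℕ} (S : Tab lam n) (j m : ℕ)
    (hjm : j ≤ m) (h : rowOfVal S j < rowOfVal S m) :
    ∃ d, j ≤ d ∧ d < m ∧ rowOfVal S d < rowOfVal S (d + 1) := by
  induction m with
  | zero =>
    have hj0 : j = 0 := by omega
    subst hj0
    exact absurd h (lt_irrefl _)
  | succ m ih =>
    rcases Nat.lt_or_ge j (m + 1) with hj | hj
    · by_cases hd : rowOfVal S m < rowOfVal S (m + 1)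
      · exact ⟨m, by omega, by omega, hd⟩
      · obtain ⟨d, hd1, hd2, hd3⟩ := ih (by omega) (lt_of_lt_of_le h (le_of_not_gt hd))
        exact ⟨d, hd1, by omega, hd3⟩
    · have hj0 : j = m + 1 := by omega
      subst hj0
      exact absurd h (lt_irrefl _)

lemma rowOfVal_eq {lam : YoungDiagram} {n : ℕ} (S : Tab lam n) (a : Cell lam) :
    rowOfVal S ((S a : ℕ) + 1) = cellRow a := by
  unfold rowOfVal
  have h : (S a : ℕ) + 1 - 1 < n := by
    have := (S a).isLt; omega
  rw [dif_pos h]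
  have : (⟨(S a : ℕ) + 1 - 1, h⟩ : Fin n) = S a := by
    apply Fin.ext; simp
  rw [this, Equiv.symm_apply_apply]

/-- For every standard Young tableau `S` of a shape `λ` of size `n`,
the integer filling `b ↦ ccTab_μ(S)(b) − ccTab′_μ(S)(b)` is weakly increasing from left
to right along each row of `λ` and strictly increasing from bottom to top along each
column of `λ`. -/
theorem stmt7 (n k : ℕ) (hn : 1 ≤ n) (hk1 : 1 ≤ k) (hkn : k ≤ n)
    (lam : YoungDiagram) (hlam : lam.card = n)
    (S : Tab lam n) (hS : IsSYT S) :
    (∀ a b : Cell lam, cellRow a = cellRow b → cellCol a ≤ cellCol b →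
      (ccTabMu k S a : ℤ) - (ccTabMu' k S a : ℤ) ≤
        (ccTabMu k S b : ℤ) - (ccTabMu' k S b : ℤ)) ∧
    (∀ a b : Cell lam, cellCol a = cellCol b → cellRow a < cellRow b →
      (ccTabMu k S a : ℤ) - (ccTabMu' k S a : ℤ) <
        (ccTabMu k S b : ℤ) - (ccTabMu' k S b : ℤ)) := by
  have hkey : ∀ a : Cell lam, (ccTabMu k S a : ℤ) - (ccTabMu' k S a : ℤ)
      = (((DesSet S).filter (· ≤ (S a : ℕ))).card : ℤ)
        - (((DesSet S).filter (· ≤ n - k)).card : ℤ) := by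
    intro a
    unfold ccTabMu ccTabMu'
    exact key_card (DesSet S) (n - k) (S a)
  constructor
  · intro a b hrow hcol
    have hab : (S a : ℕ) ≤ (S b : ℕ) := by
      rcases Nat.lt_or_ge (cellCol a) (cellCol b) with h | h
      · exact le_of_lt (hS.1 a b hrow h)
      · have hcc : cellCol a = cellCol b := le_antisymm hcol h
        have : a = b := Subtype.ext (Prod.ext hrow hcc)
        rw [this]
    rw [hkey a, hkey b]
    have : ((DesSet S).filter (· ≤ (S a : ℕ))).card
        ≤ ((DesSet S).filter (· ≤ (S b : ℕ))).card := by
      apply Finset.card_le_card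
      intro x hx
      rw [Finset.mem_filter] at hx ⊢
      exact ⟨hx.1, hx.2.trans hab⟩
    omega
  · intro a b hcol hrow
    have hab : S a < S b := hS.2 a b hcol hrow
    have hab' : (S a : ℕ) < (S b : ℕ) := hab
    obtain ⟨d, hd1, hd2, hd3⟩ := exists_descent S ((S a : ℕ) + 1) ((S b : ℕ) + 1)
      (by omega) (by rw [rowOfVal_eq, rowOfVal_eq]; exact hrow)
    have hdDes : d ∈ DesSet S := by
      unfold DesSet
      rw [Finset.mem_filter, Finset.mem_Icc]
      have hbn : (S b : ℕ) < n := (S b).isLt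
      exact ⟨⟨by omega, by omega⟩, hd3⟩
    rw [hkey a, hkey b]
    have : ((DesSet S).filter (· ≤ (S a : ℕ))).card
        < ((DesSet S).filter (· ≤ (S b : ℕ))).card := by
      apply Finset.card_lt_card
      constructor
      · intro x hx
        rw [Finset.mem_filter] at hx ⊢
        exact ⟨hx.1, hx.2.trans (le_of_lt hab')⟩
      · intro hsub
        have hdmem : d ∈ (DesSet S).filter (· ≤ (S b : ℕ)) :=
          Finset.mem_filter.2 ⟨hdDes, by omega⟩
        have := Finset.mem_filter.1 (hsub hdmem)
        omega
    omega
end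
end

section
/- Let n ≥ 1, let λ be a partition of n with conjugate partition λ′, let T ∈ Tab(λ), and let c, d be functions from the cells of λ to ℕ. Let a < b be two column indices of λ and let t be a row index with t ≤ λ′_b (so column b contains a cell in row t, counting rows from the bottom starting at 1). Let A be the set of entries of T lying in column a in rows ≥ t, let B be the set of entries of T lying in column b in rows ≤ t, and let S^{a,b}_t ≤ Sₙ be the subgroup of all permutations fixing every element of {1,…,n} outside A ∪ B. Then the Garnir element G^{a,b}_t = Σ_{ω ∈ S^{a,b}_t} sgn(ω)·ω annihilates F_T^{c,d}: G^{a,b}_t · F_T^{c,d} = 0 in ℂ[𝐱,𝐲]. -/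
open MvPolynomial

noncomputable section

/-- The set `A` of entries of `T` lying in column `a` in rows `≥ t` (rows and columns
`0`-indexed, rows counted from the bottom). -/
def garnirA {lam : YoungDiagram} {n : ℕ} (T : Tab lam n) (a t : ℕ) : Finset (Fin n) :=
  ((Finset.univ : Finset (Cell lam)).filter
    fun cel => cellCol cel = a ∧ t ≤ cellRow cel).image fun cel => T cel

/-- The set `B` of entries of `T` lying in column `b` in rows `≤ t`. -/
def garnirB {lam : YoungDiagram} {n : ℕ} (T : Tab lam n) (b t : ℕ) : Finset (Fin n) :=
  ((Finset.univ : Finset (Cell lam)).filter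
    fun cel => cellCol cel = b ∧ cellRow cel ≤ t).image fun cel => T cel

/-- The subgroup `S^{a,b}_t` of permutations fixing everything outside `A ∪ B`,
as a finset. -/
def garnirGroup {lam : YoungDiagram} {n : ℕ} (T : Tab lam n) (a b t : ℕ) :
    Finset (Equiv.Perm (Fin n)) :=
  Finset.univ.filter fun ω : Equiv.Perm (Fin n) =>
    ∀ j : Fin n, j ∉ garnirA T a t ∪ garnirB T b t → ω j = j
/-!
Fix `τ ∈ C(T)`. As `τ⁻¹` preserves columns, the entries `τ⁻¹ i` for `i ∈ A` lie in distinct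
rows of column `a`, and those for `i ∈ B` in distinct rows of column `b`; all these rows are
below `λ'_b ≤ λ'_a`. Since `|A| + |B| = (λ'_a - t) + (t + 1) > λ'_a`, some `i ∈ A` and `j ∈ B`
have `τ⁻¹ i`, `τ⁻¹ j` in a common row. The transposition `s = (i j)` lies in `S^{a,b}_t`,
while `τ⁻¹ s τ = (τ⁻¹ i  τ⁻¹ j)` lies in `R(T)` and is absorbed by the row sum. Hence
`ω ↦ ω s` is a sign-reversing involution on the terms `sgn(ω) · ω τ Σ_{σ ∈ R(T)} σ (x_T^c y_T^d)`,
and their sum vanishes.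
-/

open Equiv Finset

lemma diagAct_mul {n : ℕ} (π ρ : Perm (Fin n)) (f : PolyXY n) :
    diagAct (π * ρ) f = diagAct π (diagAct ρ f) := by
  simp only [diagAct, rename_rename]
  congr 2
  funext x
  cases x <;> rfl

lemma diagAct_sum {n : ℕ} (π : Perm (Fin n)) {ι : Type*} (s : Finset ι) (f : ι → PolyXY n) :
    diagAct π (∑ i ∈ s, f i) = ∑ i ∈ s, diagAct π (f i) :=
  map_sum (rename (Sum.map ⇑π ⇑π)) f s

lemma diagAct_smul {n : ℕ} (π : Perm (Fin n)) (z : ℂ) (f : PolyXY n) :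
    diagAct π (z • f) = z • diagAct π f :=
  map_smul (rename (Sum.map ⇑π ⇑π)).toLinearMap z f

lemma Equiv.Perm.sum_sign_smul_eq_zero_of_mul_swap {α R M : Type*} [DecidableEq α] [Fintype α]
    [Ring R] [AddCommGroup M] [Module R M] {G : Finset (Perm α)} {i j : α} (hij : i ≠ j)
    (hG : ∀ ω ∈ G, ω * swap i j ∈ G) {f : Perm α → M}
    (hf : ∀ ω ∈ G, f (ω * swap i j) = f ω) :
    ∑ ω ∈ G, ((Perm.sign ω : ℤ) : R) • f ω = 0 := by
  refine sum_involution (fun ω _ => ω * swap i j) (fun ω hω => ?_) (fun ω _ _ => ?_) hG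
    (fun ω _ => by simp [mul_assoc])
  · rw [hf ω hω, Perm.sign_mul, Perm.sign_swap hij]
    simp
  · simpa using hij

section Tableau

variable {lam : YoungDiagram} {n : ℕ}

def entryRow (T : Tab lam n) (i : Fin n) : ℕ := cellRow (T.symm i)

def entryCol (T : Tab lam n) (i : Fin n) : ℕ := cellCol (T.symm i)

lemma entryRow_lt_colLen (T : Tab lam n) (i : Fin n) :
    entryRow T i < lam.colLen (entryCol T i) :=
  YoungDiagram.mem_iff_lt_colLen.mp (T.symm i).2

lemma entryRow_injOn (T : Tab lam n) (c : ℕ) : Set.InjOn (entryRow T) {i | entryCol T i = c} :=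
  fun _ hi _ hi' h => T.symm.injective <| Subtype.ext <| Prod.ext h (hi.trans hi'.symm)

lemma mem_rowGroup_iff {T : Tab lam n} {σ : Perm (Fin n)} :
    σ ∈ rowGroup T ↔ ∀ i, entryRow T (σ i) = entryRow T i := by
  simp only [rowGroup, mem_filter, mem_univ, true_and, entryRow]
  exact ⟨fun h i => by simpa using h (T.symm i), fun h b => by simpa using h (T b)⟩

lemma mem_colGroup_iff {T : Tab lam n} {σ : Perm (Fin n)} :
    σ ∈ colGroup T ↔ ∀ i, entryCol T (σ i) = entryCol T i := by
  simp only [colGroup, mem_filter, mem_univ, true_and, entryCol]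
  exact ⟨fun h i => by simpa using h (T.symm i), fun h b => by simpa using h (T b)⟩

lemma swap_mem_rowGroup {T : Tab lam n} {i j : Fin n} (h : entryRow T i = entryRow T j) :
    swap i j ∈ rowGroup T := by
  rw [mem_rowGroup_iff]
  intro k
  rw [swap_apply_def]
  split_ifs <;> simp_all

lemma sum_rowGroup_mul_left {M : Type*} [AddCommMonoid M] {T : Tab lam n} {ρ : Perm (Fin n)}
    (hρ : ρ ∈ rowGroup T) (F : Perm (Fin n) → M) :
    ∑ σ ∈ rowGroup T, F (ρ * σ) = ∑ σ ∈ rowGroup T, F σ :=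
  sum_equiv (Equiv.mulLeft ρ) (fun σ => by simp [mem_rowGroup_iff, mem_rowGroup_iff.mp hρ])
    fun _ _ => rfl

lemma entryCol_inv_apply_of_mem_colGroup {T : Tab lam n} {τ : Perm (Fin n)}
    (hτ : τ ∈ colGroup T) (i : Fin n) : entryCol T (τ⁻¹ i) = entryCol T i := by
  simpa using (mem_colGroup_iff.mp hτ (τ⁻¹ i)).symm

lemma card_filter_entryCol (T : Tab lam n) (c : ℕ) (p : ℕ → Prop) [DecidablePred p] :
    #{i | entryCol T i = c ∧ p (entryRow T i)} = #{r ∈ range (lam.colLen c) | p r} := by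
  refine card_nbij (entryRow T) (fun i hi => ?_) ((entryRow_injOn T c).mono fun i hi => ?_)
    (fun r hr => ?_)
  · simp only [coe_filter, mem_univ, true_and, Set.mem_ofPred_eq, mem_range] at hi ⊢
    exact ⟨hi.1 ▸ entryRow_lt_colLen T i, hi.2⟩
  · simp only [coe_filter, mem_univ, true_and, Set.mem_ofPred_eq] at hi ⊢
    exact hi.1
  · simp only [coe_filter, mem_range, Set.mem_ofPred_eq] at hr
    refine ⟨T ⟨(r, c), YoungDiagram.mem_iff_lt_colLen.mpr hr.1⟩, ?_, ?_⟩
    · rw [coe_filter, Set.mem_ofPred_eq]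
      simpa [entryCol, entryRow, cellCol, cellRow] using hr.2
    · simp [entryRow, cellRow]

lemma mem_garnirA_iff {T : Tab lam n} {a t : ℕ} {i : Fin n} :
    i ∈ garnirA T a t ↔ entryCol T i = a ∧ t ≤ entryRow T i := by
  simp only [garnirA, mem_image, mem_filter, mem_univ, true_and, entryCol, entryRow]
  exact ⟨by rintro ⟨b, hb, rfl⟩; simpa using hb,
    fun h => ⟨T.symm i, h, T.apply_symm_apply i⟩⟩

lemma mem_garnirB_iff {T : Tab lam n} {b t : ℕ} {j : Fin n} :
    j ∈ garnirB T b t ↔ entryCol T j = b ∧ entryRow T j ≤ t := by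
  simp only [garnirB, mem_image, mem_filter, mem_univ, true_and, entryCol, entryRow]
  exact ⟨by rintro ⟨c, hc, rfl⟩; simpa using hc,
    fun h => ⟨T.symm j, h, T.apply_symm_apply j⟩⟩

lemma card_garnirA (T : Tab lam n) (a t : ℕ) : #(garnirA T a t) = lam.colLen a - t := by
  have hA : garnirA T a t = ({i | entryCol T i = a ∧ t ≤ entryRow T i} : Finset (Fin n)) := by
    ext; simp [mem_garnirA_iff]
  rw [hA, card_filter_entryCol, ← Nat.card_Ico]
  congr 1
  ext r
  simp only [mem_filter, mem_range, mem_Ico]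
  omega

lemma card_garnirB (T : Tab lam n) {b t : ℕ} (ht : t < lam.colLen b) :
    #(garnirB T b t) = t + 1 := by
  have hB : garnirB T b t = ({j | entryCol T j = b ∧ entryRow T j ≤ t} : Finset (Fin n)) := by
    ext; simp [mem_garnirB_iff]
  rw [hB, card_filter_entryCol T b (· ≤ t), ← card_range (t + 1)]
  congr 1
  ext r
  simp only [mem_filter, mem_range]
  omega

lemma exists_mem_garnirA_mem_garnirB_entryRow_eq (T : Tab lam n) {a b t : ℕ} (hab : a ≤ b)
    (ht : t < lam.colLen b) {π : Perm (Fin n)} (hπ : ∀ i, entryCol T (π i) = entryCol T i) :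
    ∃ i ∈ garnirA T a t, ∃ j ∈ garnirB T b t, entryRow T (π i) = entryRow T (π j) := by
  set r : Fin n → ℕ := fun i => entryRow T (π i)
  have hinj (c : ℕ) : Set.InjOn r {i | entryCol T i = c} :=
    (entryRow_injOn T c).comp π.injective.injOn fun i hi => (hπ i).trans hi
  have hcolLen := lam.colLen_anti a b hab
  have hA : #((garnirA T a t).image r) = lam.colLen a - t := by
    rw [card_image_of_injOn ((hinj a).mono fun i hi => (mem_garnirA_iff.mp hi).1),
      card_garnirA]
  have hB : #((garnirB T b t).image r) = t + 1 := by
    rw [card_image_of_injOn ((hinj b).mono fun j hj => (mem_garnirB_iff.mp hj).1),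
      card_garnirB T ht]
  have hsub : (garnirA T a t).image r ∪ (garnirB T b t).image r ⊆ range (lam.colLen a) := by
    intro x hx
    rw [mem_range]
    rcases mem_union.mp hx with hx | hx <;> obtain ⟨i, hi, rfl⟩ := mem_image.mp hx
    · simpa [hπ, (mem_garnirA_iff.mp hi).1, r] using entryRow_lt_colLen T (π i)
    · have := entryRow_lt_colLen T (π i)
      rw [hπ, (mem_garnirB_iff.mp hi).1] at this
      exact this.trans_le hcolLen
  have hmeet : ¬ Disjoint ((garnirA T a t).image r) ((garnirB T b t).image r) := fun hdisj => by
    have := card_le_card hsub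
    rw [card_union_of_disjoint hdisj, hA, hB, card_range] at this
    omega
  obtain ⟨x, hxA, hxB⟩ := not_disjoint_iff.mp hmeet
  obtain ⟨i, hi, rfl⟩ := mem_image.mp hxA
  obtain ⟨j, hj, hji⟩ := mem_image.mp hxB
  exact ⟨i, hi, j, hj, hji.symm⟩

lemma mul_swap_mem_garnirGroup {T : Tab lam n} {a b t : ℕ} {ω : Perm (Fin n)} {i j : Fin n}
    (hω : ω ∈ garnirGroup T a b t) (hi : i ∈ garnirA T a t ∪ garnirB T b t)
    (hj : j ∈ garnirA T a t ∪ garnirB T b t) : ω * swap i j ∈ garnirGroup T a b t := by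
  simp only [garnirGroup, mem_filter, mem_univ, true_and] at hω ⊢
  intro k hk
  rw [Perm.mul_apply, swap_apply_of_ne_of_ne (by rintro rfl; exact hk hi)
    (by rintro rfl; exact hk hj), hω k hk]

lemma sum_garnirGroup_smul_diagAct_FTcd (T : Tab lam n) (c d : Cell lam → ℕ) (a b t : ℕ) :
    ∑ ω ∈ garnirGroup T a b t, ((Perm.sign ω : ℤ) : ℂ) • diagAct ω (FTcd T c d) =
      ∑ τ ∈ colGroup T, ((Perm.sign τ : ℤ) : ℂ) •
        ∑ ω ∈ garnirGroup T a b t, ((Perm.sign ω : ℤ) : ℂ) •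
          ∑ σ ∈ rowGroup T, diagAct (ω * (τ * σ)) (tabMonomial T c d) := by
  simp only [FTcd, diagAct_sum, diagAct_smul, ← diagAct_mul, smul_sum]
  rw [sum_comm]
  exact sum_congr rfl fun τ _ => sum_congr rfl fun ω _ => sum_congr rfl fun σ _ =>
    smul_comm _ _ _

lemma sum_garnirGroup_eq_zero_of_mem_colGroup (T : Tab lam n) (c d : Cell lam → ℕ)
    {a b t : ℕ} (hab : a < b) (ht : t < lam.colLen b) {τ : Perm (Fin n)}
    (hτ : τ ∈ colGroup T) :
    ∑ ω ∈ garnirGroup T a b t, ((Perm.sign ω : ℤ) : ℂ) •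
      ∑ σ ∈ rowGroup T, diagAct (ω * (τ * σ)) (tabMonomial T c d) = 0 := by
  obtain ⟨i, hi, j, hj, hrow⟩ := exists_mem_garnirA_mem_garnirB_entryRow_eq T hab.le ht
    (entryCol_inv_apply_of_mem_colGroup hτ)
  have hij : i ≠ j := by
    rintro rfl
    have := (mem_garnirA_iff.mp hi).1.symm.trans (mem_garnirB_iff.mp hj).1
    omega
  have hρ : τ⁻¹ * swap i j * τ ∈ rowGroup T := by
    have := swap_mem_rowGroup hrow
    rwa [swap_apply_apply, inv_inv] at this
  refine Perm.sum_sign_smul_eq_zero_of_mul_swap hij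
    (fun ω hω => mul_swap_mem_garnirGroup hω (mem_union_left _ hi) (mem_union_right _ hj))
    fun ω _ => ?_
  calc ∑ σ ∈ rowGroup T, diagAct (ω * swap i j * (τ * σ)) (tabMonomial T c d)
      = ∑ σ ∈ rowGroup T,
          diagAct (ω * (τ * (τ⁻¹ * swap i j * τ * σ))) (tabMonomial T c d) := by
        simp only [mul_assoc, mul_inv_cancel_left]
    _ = _ := sum_rowGroup_mul_left hρ fun σ => diagAct (ω * (τ * σ)) (tabMonomial T c d)

end Tableau

theorem stmt10_general (n : ℕ)
    (lam : YoungDiagram)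
    (T : Tab lam n) (c d : Cell lam → ℕ)
    (a b t : ℕ) (hab : a < b) (htb : (t, b) ∈ lam.cells) :
    ∑ ω ∈ garnirGroup T a b t,
      ((Equiv.Perm.sign ω : ℤ) : ℂ) • diagAct ω (FTcd T c d) = 0 := by
  have ht : t < lam.colLen b := YoungDiagram.mem_iff_lt_colLen.mp htb
  rw [sum_garnirGroup_smul_diagAct_FTcd]
  refine sum_eq_zero fun τ hτ => ?_
  rw [sum_garnirGroup_eq_zero_of_mem_colGroup T c d hab ht hτ, smul_zero]

/-- The Garnir element `G^{a,b}_t = Σ_{ω ∈ S^{a,b}_t} sgn(ω)·ω`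
annihilates `F_T^{c,d}`.  Here `a < b` are column indices, and `t` is a (`0`-indexed)
row index such that column `b` contains a cell in row `t`. -/
theorem stmt10 (n : ℕ) (hn : 1 ≤ n)
    (lam : YoungDiagram) (hlam : lam.card = n)
    (T : Tab lam n) (c d : Cell lam → ℕ)
    (a b t : ℕ) (hab : a < b) (htb : (t, b) ∈ lam.cells) :
    ∑ ω ∈ garnirGroup T a b t,
      ((Equiv.Perm.sign ω : ℤ) : ℂ) • diagAct ω (FTcd T c d) = 0 :=
  stmt10_general n lam T c d a b t hab htb
end
end

section
/- Let n ≥ 1 and let u and v be permutation words on {1,…,n} (sequences using each of 1,…,n exactly once) such that v is obtained from u by a single elementary Knuth move: replacing three consecutive letters b,a,c by b,c,a or vice versa, where a < b < c, or replacing three consecutive letters a,c,b by c,a,b or vice versa, where a < b < c (all other letters unchanged and in the same positions). Then for every k ∈ {1,…,n−1}, k+1 occurs to the left of k in u if and only if k+1 occurs to the left of k in v; i.e., u and v have exactly the same value-descents. -/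
noncomputable section

/-- The position (`0`-indexed) of the `1`-indexed value `j` in the word
`w(1)w(2)⋯w(n)` of the permutation `w` (letter at `0`-indexed position `i` is the
value `w i`, representing the `1`-indexed letter `(w i : ℕ) + 1`). -/
def posOf {n : ℕ} (w : Equiv.Perm (Fin n)) (j : ℕ) : ℕ :=
  if h : j - 1 < n then (w.symm ⟨j - 1, h⟩ : ℕ) else 0

/-- The value-descents of `w`: those `k ∈ {1,…,n−1}` such that `k+1` occurs to the
left of `k` in the word of `w`. -/
def valueDescents {n : ℕ} (w : Equiv.Perm (Fin n)) : Finset ℕ :=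
  (Finset.Icc 1 (n - 1)).filter fun k => posOf w (k + 1) < posOf w k

/-- The cocharge `cc(w) = Σ_{k value-descent of w} (n−k)`. -/
def cocharge {n : ℕ} (w : Equiv.Perm (Fin n)) : ℕ :=
  ∑ k ∈ valueDescents w, (n - k)

/-- `rev(flip(w))`: the word whose `i`-th letter (`1`-indexed) is
`n+1−w(n+1−i)`. -/
def revFlip {n : ℕ} (w : Equiv.Perm (Fin n)) : Equiv.Perm (Fin n) :=
  (Fin.revPerm.trans w).trans Fin.revPerm

/-- `v` is obtained from `u` by a single elementary Knuth move (both directions of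
`bac ↔ bca` and `acb ↔ cab` with `a < b < c`, applied to three consecutive letters,
all other letters unchanged). -/
def KnuthMove {n : ℕ} (u v : Equiv.Perm (Fin n)) : Prop :=
  ∃ (i : ℕ) (hi : i + 2 < n) (a b c : Fin n), a < b ∧ b < c ∧
    (∀ j : Fin n, (j : ℕ) ≠ i → (j : ℕ) ≠ i + 1 → (j : ℕ) ≠ i + 2 → u j = v j) ∧
    ((u ⟨i, by omega⟩ = b ∧ u ⟨i + 1, by omega⟩ = a ∧ u ⟨i + 2, hi⟩ = c ∧
      v ⟨i, by omega⟩ = b ∧ v ⟨i + 1, by omega⟩ = c ∧ v ⟨i + 2, hi⟩ = a) ∨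
     (u ⟨i, by omega⟩ = b ∧ u ⟨i + 1, by omega⟩ = c ∧ u ⟨i + 2, hi⟩ = a ∧
      v ⟨i, by omega⟩ = b ∧ v ⟨i + 1, by omega⟩ = a ∧ v ⟨i + 2, hi⟩ = c) ∨
     (u ⟨i, by omega⟩ = a ∧ u ⟨i + 1, by omega⟩ = c ∧ u ⟨i + 2, hi⟩ = b ∧
      v ⟨i, by omega⟩ = c ∧ v ⟨i + 1, by omega⟩ = a ∧ v ⟨i + 2, hi⟩ = b) ∨
     (u ⟨i, by omega⟩ = c ∧ u ⟨i + 1, by omega⟩ = a ∧ u ⟨i + 2, hi⟩ = b ∧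
      v ⟨i, by omega⟩ = a ∧ v ⟨i + 1, by omega⟩ = c ∧ v ⟨i + 2, hi⟩ = b))

lemma hoth_aux {n : ℕ} (u v : Equiv.Perm (Fin n)) (i : ℕ) (hi : i + 2 < n) (a c : Fin n)
    (hfix : ∀ j : Fin n, (j : ℕ) ≠ i → (j : ℕ) ≠ i + 1 → (j : ℕ) ≠ i + 2 → u j = v j)
    (h0 : u ⟨i, by omega⟩ = v ⟨i, by omega⟩ ∨ u ⟨i, by omega⟩ = a ∨ u ⟨i, by omega⟩ = c)
    (h1 : u ⟨i + 1, by omega⟩ = v ⟨i + 1, by omega⟩ ∨ u ⟨i + 1, by omega⟩ = a ∨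
      u ⟨i + 1, by omega⟩ = c)
    (h2 : u ⟨i + 2, hi⟩ = v ⟨i + 2, hi⟩ ∨ u ⟨i + 2, hi⟩ = a ∨ u ⟨i + 2, hi⟩ = c) :
    ∀ x : Fin n, x ≠ a → x ≠ c → u.symm x = v.symm x := by
  intro x hxa hxc
  have hux : u (u.symm x) = x := u.apply_symm_apply x
  have key : v (u.symm x) = x := by
    by_cases e0 : ((u.symm x : Fin n) : ℕ) = i
    · have hj : (u.symm x : Fin n) = ⟨i, by omega⟩ := Fin.ext e0
      rw [hj] at hux ⊢
      rcases h0 with h | h | h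
      · rw [← h, hux]
      · exact absurd (hux.symm.trans h) hxa
      · exact absurd (hux.symm.trans h) hxc
    · by_cases e1 : ((u.symm x : Fin n) : ℕ) = i + 1
      · have hj : (u.symm x : Fin n) = ⟨i + 1, by omega⟩ := Fin.ext e1
        rw [hj] at hux ⊢
        rcases h1 with h | h | h
        · rw [← h, hux]
        · exact absurd (hux.symm.trans h) hxa
        · exact absurd (hux.symm.trans h) hxc
      · by_cases e2 : ((u.symm x : Fin n) : ℕ) = i + 2
        · have hj : (u.symm x : Fin n) = ⟨i + 2, hi⟩ := Fin.ext e2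
          rw [hj] at hux ⊢
          rcases h2 with h | h | h
          · rw [← h, hux]
          · exact absurd (hux.symm.trans h) hxa
          · exact absurd (hux.symm.trans h) hxc
        · rw [← hfix _ e0 e1 e2, hux]
  have : v.symm x = u.symm x := by
    rw [Equiv.symm_apply_eq]; exact key.symm
  exact this.symm

lemma key_lemma {n : ℕ} (u v : Equiv.Perm (Fin n)) (a c p q : Fin n)
    (hpq : (q : ℕ) = (p : ℕ) + 1) (hca : (a : ℕ) + 1 < (c : ℕ))
    (h1 : u.symm a = p) (h2 : u.symm c = q) (h3 : v.symm a = q) (h4 : v.symm c = p)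
    (hoth : ∀ x : Fin n, x ≠ a → x ≠ c → u.symm x = v.symm x)
    (x y : Fin n) (hxy : (y : ℕ) = (x : ℕ) + 1) :
    ((u.symm y : ℕ) < (u.symm x : ℕ) ↔ (v.symm y : ℕ) < (v.symm x : ℕ)) := by
  by_cases hxa : x = a
  · have hva : (x : ℕ) = (a : ℕ) := congrArg Fin.val hxa
    have hya : y ≠ a := fun h => by have := congrArg Fin.val h; omega
    have hyc : y ≠ c := fun h => by have := congrArg Fin.val h; omega
    have heq : u.symm y = v.symm y := hoth y hya hyc
    have hp : (u.symm y : ℕ) ≠ (p : ℕ) := fun h =>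
      hya (u.symm.injective (Fin.ext (h.trans (congrArg Fin.val h1).symm)))
    have hq : (u.symm y : ℕ) ≠ (q : ℕ) := fun h =>
      hyc (u.symm.injective (Fin.ext (h.trans (congrArg Fin.val h2).symm)))
    rw [← heq, hxa, h1, h3]
    omega
  · by_cases hxc : x = c
    · have hvc : (x : ℕ) = (c : ℕ) := congrArg Fin.val hxc
      have hya : y ≠ a := fun h => by have := congrArg Fin.val h; omega
      have hyc : y ≠ c := fun h => by have := congrArg Fin.val h; omega
      have heq : u.symm y = v.symm y := hoth y hya hyc
      have hp : (u.symm y : ℕ) ≠ (p : ℕ) := fun h =>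
        hya (u.symm.injective (Fin.ext (h.trans (congrArg Fin.val h1).symm)))
      have hq : (u.symm y : ℕ) ≠ (q : ℕ) := fun h =>
        hyc (u.symm.injective (Fin.ext (h.trans (congrArg Fin.val h2).symm)))
      rw [← heq, hxc, h2, h4]
      omega
    · have hx : u.symm x = v.symm x := hoth x hxa hxc
      by_cases hya : y = a
      · subst hya
        have hp : (u.symm x : ℕ) ≠ (p : ℕ) := fun h =>
          hxa (u.symm.injective (Fin.ext (h.trans (congrArg Fin.val h1).symm)))
        have hq : (u.symm x : ℕ) ≠ (q : ℕ) := fun h =>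
          hxc (u.symm.injective (Fin.ext (h.trans (congrArg Fin.val h2).symm)))
        rw [← hx, h1, h3]
        omega
      · by_cases hyc : y = c
        · subst hyc
          have hp : (u.symm x : ℕ) ≠ (p : ℕ) := fun h =>
            hxa (u.symm.injective (Fin.ext (h.trans (congrArg Fin.val h1).symm)))
          have hq : (u.symm x : ℕ) ≠ (q : ℕ) := fun h =>
            hxc (u.symm.injective (Fin.ext (h.trans (congrArg Fin.val h2).symm)))
          rw [← hx, h2, h4]
          omega
        · rw [hx, hoth y hya hyc]

/-- An elementary Knuth move does not change the value-descents:
for every `k ∈ {1,…,n−1}`, `k+1` occurs to the left of `k` in `u` iff it does in `v`. -/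
theorem stmt15 (n : ℕ) (hn : 1 ≤ n) (u v : Equiv.Perm (Fin n))
    (huv : KnuthMove u v) :
    ∀ k : ℕ, 1 ≤ k → k ≤ n - 1 →
      (posOf u (k + 1) < posOf u k ↔ posOf v (k + 1) < posOf v k) := by
  obtain ⟨i, hi, a, b, c, hab, hbc, hfix, hcase⟩ := huv
  intro k hk1 hk2
  have hkn : k < n := by omega
  have hk1n : k - 1 < n := by omega
  have hposu1 : posOf u (k + 1) = (u.symm ⟨k, hkn⟩ : ℕ) := by
    simp only [posOf, Nat.add_sub_cancel, dif_pos hkn]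
  have hposu : posOf u k = (u.symm ⟨k - 1, hk1n⟩ : ℕ) := by
    simp only [posOf, dif_pos hk1n]
  have hposv1 : posOf v (k + 1) = (v.symm ⟨k, hkn⟩ : ℕ) := by
    simp only [posOf, Nat.add_sub_cancel, dif_pos hkn]
  have hposv : posOf v k = (v.symm ⟨k - 1, hk1n⟩ : ℕ) := by
    simp only [posOf, dif_pos hk1n]
  rw [hposu1, hposu, hposv1, hposv]
  have hca : (a : ℕ) + 1 < (c : ℕ) := by
    have h1 : (a : ℕ) < (b : ℕ) := hab
    have h2 : (b : ℕ) < (c : ℕ) := hbc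
    omega
  have hxy : ((⟨k, hkn⟩ : Fin n) : ℕ) = ((⟨k - 1, hk1n⟩ : Fin n) : ℕ) + 1 := by
    simp; omega
  have symmeq : ∀ (w : Equiv.Perm (Fin n)) (z : Fin n) (m : ℕ) (hm : m < n),
      w ⟨m, hm⟩ = z → w.symm z = ⟨m, hm⟩ := by
    intro w z m hm h
    rw [Equiv.symm_apply_eq]; exact h.symm
  rcases hcase with ⟨hu0, hu1, hu2, hv0, hv1, hv2⟩ | ⟨hu0, hu1, hu2, hv0, hv1, hv2⟩ |
    ⟨hu0, hu1, hu2, hv0, hv1, hv2⟩ | ⟨hu0, hu1, hu2, hv0, hv1, hv2⟩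
  · -- u = bac, v = bca : a,c swap positions i+1, i+2
    exact key_lemma u v a c ⟨i + 1, by omega⟩ ⟨i + 2, hi⟩ rfl hca
      (symmeq u a (i + 1) (by omega) hu1) (symmeq u c (i + 2) hi hu2)
      (symmeq v a (i + 2) hi hv2) (symmeq v c (i + 1) (by omega) hv1)
      (hoth_aux u v i hi a c hfix (Or.inl (hu0.trans hv0.symm))
        (Or.inr (Or.inl hu1)) (Or.inr (Or.inr hu2))) _ _ hxy
  · -- u = bca, v = bac : swap roles of u and v
    exact (key_lemma v u a c ⟨i + 1, by omega⟩ ⟨i + 2, hi⟩ rfl hca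
      (symmeq v a (i + 1) (by omega) hv1) (symmeq v c (i + 2) hi hv2)
      (symmeq u a (i + 2) hi hu2) (symmeq u c (i + 1) (by omega) hu1)
      (hoth_aux v u i hi a c (fun j e0 e1 e2 => (hfix j e0 e1 e2).symm)
        (Or.inl (hv0.trans hu0.symm))
        (Or.inr (Or.inl hv1)) (Or.inr (Or.inr hv2))) _ _ hxy).symm
  · -- u = acb, v = cab : a,c swap positions i, i+1
    exact key_lemma u v a c ⟨i, by omega⟩ ⟨i + 1, by omega⟩ rfl hca
      (symmeq u a i (by omega) hu0) (symmeq u c (i + 1) (by omega) hu1)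
      (symmeq v a (i + 1) (by omega) hv1) (symmeq v c i (by omega) hv0)
      (hoth_aux u v i hi a c hfix (Or.inr (Or.inl hu0))
        (Or.inr (Or.inr hu1)) (Or.inl (hu2.trans hv2.symm))) _ _ hxy
  · -- u = cab, v = acb
    exact (key_lemma v u a c ⟨i, by omega⟩ ⟨i + 1, by omega⟩ rfl hca
      (symmeq v a i (by omega) hv0) (symmeq v c (i + 1) (by omega) hv1)
      (symmeq u a (i + 1) (by omega) hu1) (symmeq u c i (by omega) hu0)
      (hoth_aux v u i hi a c (fun j e0 e1 e2 => (hfix j e0 e1 e2).symm)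
        (Or.inr (Or.inl hv0))
        (Or.inr (Or.inr hv1)) (Or.inl (hv2.trans hu2.symm))) _ _ hxy).symm
end
end

section
/- Let n ≥ 1 and 1 ≤ k ≤ n. Let L = ℂ[x₁^{±1},…,xₙ^{±1}] be the ring of Laurent polynomials in x₁,…,xₙ over ℂ, and let ψ : ℂ[𝐱,𝐲] → L be the ℂ-algebra homomorphism with ψ(x_i) = x_i and ψ(y_i) = x_i^{−1} for all i. For a partition λ of n, T ∈ Tab(λ) and S ∈ SYT(λ), let q = #{d ∈ Des(S) : d ≤ n−k} (the largest entry of ccTab′_μ(S)). Then in L: ψ(F_T^S) · (x₁x₂⋯xₙ)^q = F_T^S(𝐱), where F_T^S(𝐱) = ε_T(∏_{b∈λ} x_{T(b)}^{ccTab(S)(b)}) is the one-variable higher Specht polynomial of Ariki–Terasoma–Yamada, and ccTab(S) is the ordinary cocharge tableau of S, assigning to the cell of S containing j the value #{d ∈ Des(S) : d ≤ j−1}. -/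
open MvPolynomial

noncomputable section

/-- The Laurent polynomial ring `ℂ[x₁^{±1},…,xₙ^{±1}]`. -/
abbrev Laur (n : ℕ) : Type := AddMonoidAlgebra ℂ (Fin n → ℤ)

/-- The Laurent monomial `x₁^{m(1)} ⋯ xₙ^{m(n)}`. -/
def laurMon {n : ℕ} (m : Fin n → ℤ) : Laur n := AddMonoidAlgebra.single m 1

/-- The `ℂ`-algebra map `ψ : ℂ[𝐱,𝐲] → ℂ[x₁^{±1},…,xₙ^{±1}]`, `x_i ↦ x_i`,
`y_i ↦ x_i^{−1}`. -/
def psiMap (n : ℕ) : PolyXY n →ₐ[ℂ] Laur n :=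
  aeval (Sum.elim (fun i : Fin n => laurMon (Pi.single i (1 : ℤ)))
    (fun i : Fin n => laurMon (Pi.single i (-1 : ℤ))))

/-- The embedding `ℂ[x₁,…,xₙ] → ℂ[x₁^{±1},…,xₙ^{±1}]`. -/
def embX (n : ℕ) : MvPolynomial (Fin n) ℂ →ₐ[ℂ] Laur n :=
  aeval fun i : Fin n => laurMon (Pi.single i (1 : ℤ))

/-- The ordinary cocharge tableau of `S`: its value on the cell containing the
1-indexed entry `j` is `#{d ∈ Des(S) : d ≤ j−1}`. -/
def ccTabOrd {lam : YoungDiagram} {n : ℕ} (S : Tab lam n) (b : Cell lam) : ℕ :=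
  ((DesSet S).filter fun d => d ≤ (S b : ℕ)).card

/-- The one-variable higher Specht polynomial of Ariki–Terasoma–Yamada,
`F_T^S(𝐱) = ε_T(∏_b x_{T(b)}^{ccTab(S)(b)})`. -/
def FTSx {lam : YoungDiagram} {n : ℕ} (T S : Tab lam n) : MvPolynomial (Fin n) ℂ :=
  ∑ τ ∈ colGroup T, ∑ σ ∈ rowGroup T,
    ((Equiv.Perm.sign τ : ℤ) : ℂ) •
      rename (⇑(τ * σ)) (∏ b : Cell lam, X (T b) ^ ccTabOrd S b)

/-! ψ sends the monomial `π · x_T^c y_T^d` to the Laurent monomial with exponent `c(b) - d(b)` at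
`x_{π(T(b))}`, and multiplying by `(x₁⋯xₙ)^q` adds `q` to every exponent. So the identity holds
term by term in `ε_T` as soon as `ccTab_μ(S)(b) + q = ccTab(S)(b) + ccTab′_μ(S)(b)` in every cell.
For the cell containing `j`, both sides count a descent `d` exactly once if `d ≤ j - 1` or
`d ≤ n - k`, and not at all otherwise. -/

lemma laurMon_add {n : ℕ} (a b : Fin n → ℤ) : laurMon (a + b) = laurMon a * laurMon b := by
  rw [laurMon, laurMon, laurMon, AddMonoidAlgebra.single_mul_single, one_mul]

lemma laurMon_pow {n : ℕ} (a : Fin n → ℤ) (e : ℕ) : laurMon a ^ e = laurMon (e • a) := by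
  rw [laurMon, laurMon, AddMonoidAlgebra.single_pow, one_pow]

lemma prod_laurMon {n : ℕ} {ι : Type*} (s : Finset ι) (f : ι → Fin n → ℤ) :
    ∏ i ∈ s, laurMon (f i) = laurMon (∑ i ∈ s, f i) := by
  simp only [laurMon, AddMonoidAlgebra.prod_single, Finset.prod_const_one]

lemma laurMon_single_pow {n : ℕ} (i : Fin n) (a : ℤ) (e : ℕ) :
    laurMon (Pi.single i a) ^ e = laurMon (Pi.single i (e * a)) := by
  rw [laurMon_pow, ← Pi.single_smul, nsmul_eq_mul]

lemma prod_laurMon_single_one_pow {n : ℕ} {ι : Type*} [Fintype ι] (σ : ι ≃ Fin n) (q : ℕ) :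
    (∏ i : Fin n, laurMon (Pi.single i (1 : ℤ))) ^ q = laurMon (∑ b, Pi.single (σ b) (q : ℤ)) := by
  rw [← Finset.prod_pow, ← σ.prod_comp]
  simp only [laurMon_single_pow, mul_one, prod_laurMon]

section Monomials

variable {lam : YoungDiagram} {n : ℕ} (T : Tab lam n) (π : Equiv.Perm (Fin n))

lemma psiMap_diagAct_tabMonomial (c d : Cell lam → ℕ) :
    psiMap n (diagAct π (tabMonomial T c d)) =
      laurMon (∑ b, Pi.single (π (T b)) ((c b : ℤ) - d b)) := by
  simp only [psiMap, diagAct, tabMonomial, aeval_rename, map_prod, map_mul, map_pow, aeval_X,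
    Function.comp_apply, Sum.map_inl, Sum.map_inr, Sum.elim_inl, Sum.elim_inr,
    laurMon_single_pow, ← laurMon_add, ← Pi.single_add, prod_laurMon, sub_eq_add_neg, mul_one,
    mul_neg]

lemma embX_rename_prod_X_pow (e : Cell lam → ℕ) :
    embX n (rename π (∏ b, X (T b) ^ e b)) = laurMon (∑ b, Pi.single (π (T b)) (e b : ℤ)) := by
  simp only [embX, aeval_rename, map_prod, map_pow, aeval_X, Function.comp_apply,
    laurMon_single_pow, mul_one, prod_laurMon]

lemma psiMap_diagAct_tabMonomial_mul_pow {c d e : Cell lam → ℕ} {q : ℕ}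
    (h : ∀ b, c b + q = e b + d b) :
    psiMap n (diagAct π (tabMonomial T c d)) * (∏ i : Fin n, laurMon (Pi.single i (1 : ℤ))) ^ q =
      embX n (rename π (∏ b, X (T b) ^ e b)) := by
  rw [psiMap_diagAct_tabMonomial, prod_laurMon_single_one_pow (T.trans π),
    embX_rename_prod_X_pow, ← laurMon_add, ← Finset.sum_add_distrib]
  refine congrArg laurMon (Finset.sum_congr rfl fun b _ => ?_)
  rw [Equiv.trans_apply, ← Pi.single_add]
  congr 1
  have := h b
  omega

end Monomials

theorem psiMap_FTcd_mul_pow {lam : YoungDiagram} {n : ℕ} (T : Tab lam n)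
    {c d e : Cell lam → ℕ} {q : ℕ} (h : ∀ b, c b + q = e b + d b) :
    psiMap n (FTcd T c d) * (∏ i : Fin n, laurMon (Pi.single i (1 : ℤ))) ^ q =
      embX n (∑ τ ∈ colGroup T, ∑ σ ∈ rowGroup T,
        ((Equiv.Perm.sign τ : ℤ) : ℂ) • rename (⇑(τ * σ)) (∏ b, X (T b) ^ e b)) := by
  simp only [FTcd, map_sum, map_smul, Finset.sum_mul, smul_mul_assoc,
    psiMap_diagAct_tabMonomial_mul_pow T _ h]

lemma ccTabMu_add_card_filter_le {lam : YoungDiagram} {n : ℕ} (k : ℕ) (S : Tab lam n)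
    (b : Cell lam) :
    ccTabMu k S b + ((DesSet S).filter fun d => d ≤ n - k).card =
      ccTabOrd S b + ccTabMu' k S b := by
  simp only [ccTabMu, ccTabMu', ccTabOrd, Finset.card_filter, ← Finset.sum_add_distrib]
  refine Finset.sum_congr rfl fun d _ => ?_
  split_ifs <;> omega

theorem stmt17_general (n k : ℕ) (lam : YoungDiagram) (T : Tab lam n) (S : Tab lam n) :
    psiMap n (FTS k T S) *
        (∏ i : Fin n, laurMon (Pi.single i (1 : ℤ))) ^
          ((DesSet S).filter fun d => d ≤ n - k).card =
      embX n (FTSx T S) :=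
  psiMap_FTcd_mul_pow T (ccTabMu_add_card_filter_le k S)

/-- With `q = #{d ∈ Des(S) : d ≤ n−k}` (the largest entry of
`ccTab′_μ(S)`), `ψ(F_T^S) · (x₁⋯xₙ)^q = F_T^S(𝐱)` in the Laurent polynomial ring. -/
theorem stmt17 (n k : ℕ) (hn : 1 ≤ n) (hk1 : 1 ≤ k) (hkn : k ≤ n)
    (lam : YoungDiagram) (hlam : lam.card = n)
    (T : Tab lam n) (S : Tab lam n) (hS : IsSYT S) :
    psiMap n (FTS k T S) *
        (∏ i : Fin n, laurMon (Pi.single i (1 : ℤ))) ^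
          ((DesSet S).filter fun d => d ≤ n - k).card =
      embX n (FTSx T S) :=
  stmt17_general n k lam T S
end
end
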